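/- Consider the second-order linear ODE y'' − m²y + (2p+1)α(t)^{2p} y = 0 where α is the homoclinic orbit. There exists a solution γ defined for all t ∈ ℝ with |γ(t)| ≤ C e^{mt} and |γ'(t)| ≤ C e^{mt} for all t ≥ 0, and such that the Wronskian β γ' − γ β' (with β = α') is a nonzero constant. -/

import Mathlib

open Real

/-- The homoclinic orbit of the Klein-Gordon ODE. -/
noncomputable def alph (m : ℝ) (p : ℕ) (t : ℝ) : ℝ :=
  m ^ ((1 : ℝ) / p) * ((p : ℝ) + 1) ^ ((1 : ℝ) / (2 * p)) /
    (Real.cosh (p * m * t)) ^ ((1 : ℝ) / p)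

/-!
The solution `γ` with `γ 0 = 1`, `γ' 0 = 0` exists globally because the equation is linear with a
bounded continuous coefficient: Picard–Lindelöf gives local solutions on intervals of a fixed
length through every point, so solutions extend step by step and fit together by uniqueness.
Since `β = α'` solves the same equation (differentiate `α'' = m² α - α^(2p+1)`), the Wronskian is
constant; at `t = 0` we have `β = 0`, so it equals `-β'(0) = p m² α(0) ≠ 0`. For the growth bound,
the energy `E = γ'² + m² γ²` satisfies `E' ≤ (2m + V/m) E` with `V = (2p+1) α^(2p) ≥ 0`, and `V`
has the bounded primitive `(2p+1)(p+1)m/p · tanh(pmt)`, so `E ≤ const · e^(2mt)`.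
-/

open Set Filter Topology
open scoped NNReal

section GlobalExistence

variable {E : Type*} [NormedAddCommGroup E] [NormedSpace ℝ E] {v : ℝ → E → E}

theorem IsIntegralCurveOn.exists_glue_Icc {f g : ℝ → E} {a b c : ℝ}
    (hf : IsIntegralCurveOn f v (Icc a b)) (hg : IsIntegralCurveOn g v (Icc b c))
    (hb : f b = g b) :
    ∃ h : ℝ → E, EqOn h f (Icc a b) ∧ EqOn h g (Icc b c) ∧ IsIntegralCurveOn h v (Icc a c) := by
  set h : ℝ → E := fun t => if t ≤ b then f t else g t
  have hhf : EqOn h f (Icc a b) := fun t ht => if_pos ht.2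
  have hhg : EqOn h g (Icc b c) := fun t ht => by
    rcases ht.1.eq_or_lt with rfl | hlt
    · exact (if_pos le_rfl).trans hb
    · exact if_neg hlt.not_ge
  refine ⟨h, hhf, hhg, fun t _ => ?_⟩
  have hpiece : ∀ {s : Set ℝ} {k : ℝ → E}, IsClosed s → IsIntegralCurveOn k v s → EqOn h k s →
      HasDerivWithinAt h (v t (h t)) s t := by
    intro s k hs hk hhk
    by_cases hts : t ∈ s
    · rw [hhk hts]
      exact (hk t hts).congr hhk (hhk hts)
    · exact HasFDerivWithinAt.of_notMem_closure (by rwa [hs.closure_eq])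
  refine ((hpiece isClosed_Icc hf hhf).union (hpiece isClosed_Icc hg hhg)).mono fun s hs => ?_
  rcases le_total s b with hsb | hbs
  · exact Or.inl ⟨hs.1, hsb⟩
  · exact Or.inr ⟨hbs, hs.2⟩

theorem exists_isIntegralCurveOn_Icc_nat_mul {ε : ℝ} (hε : 0 ≤ ε)
    (hloc : ∀ t₀ x₀, ∃ f : ℝ → E, f t₀ = x₀ ∧ IsIntegralCurveOn f v (Icc (t₀ - ε) (t₀ + ε)))
    (x₀ : E) (n : ℕ) :
    ∃ f : ℝ → E, f 0 = x₀ ∧ IsIntegralCurveOn f v (Icc (-(n * ε)) (n * ε)) := by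
  induction n with
  | zero =>
    obtain ⟨f, hf0, hf⟩ := hloc 0 x₀
    exact ⟨f, hf0, hf.mono (Icc_subset_Icc (by simpa using hε) (by simpa using hε))⟩
  | succ n ih =>
    obtain ⟨f, hf0, hf⟩ := ih
    set a : ℝ := n * ε
    have ha : 0 ≤ a := by positivity
    obtain ⟨fr, hfr0, hfr⟩ := hloc a (f a)
    obtain ⟨fl, hfl0, hfl⟩ := hloc (-a) (f (-a))
    obtain ⟨g, hgf, -, hg⟩ := hf.exists_glue_Icc
      (hfr.mono (Icc_subset_Icc (by linarith) le_rfl)) hfr0.symm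
    obtain ⟨h, -, hhg, hh⟩ := (hfl.mono (Icc_subset_Icc le_rfl (by linarith))).exists_glue_Icc hg
      (by rw [hfl0, hgf ⟨le_rfl, by linarith⟩])
    refine ⟨h, ?_, ?_⟩
    · rw [hhg ⟨by linarith, by linarith⟩, hgf ⟨by linarith, ha⟩, hf0]
    · convert hh using 2 <;> push_cast <;> ring

theorem exists_isIntegralCurve_of_uniform_step {K : ℝ≥0} (hlip : ∀ t, LipschitzWith K (v t))
    {ε : ℝ} (hε : 0 < ε)
    (hloc : ∀ t₀ x₀, ∃ f : ℝ → E, f t₀ = x₀ ∧ IsIntegralCurveOn f v (Icc (t₀ - ε) (t₀ + ε)))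
    (x₀ : E) : ∃ f : ℝ → E, f 0 = x₀ ∧ IsIntegralCurve f v := by
  choose f hf0 hf using exists_isIntegralCurveOn_Icc_nat_mul hε.le hloc x₀
  have hderiv : ∀ n : ℕ, ∀ t ∈ Ioo (-(n * ε)) (n * ε), HasDerivAt (f n) (v t (f n t)) t :=
    fun n t ht => ((hf n).isIntegralCurveAt (Icc_mem_nhds ht.1 ht.2)).hasDerivAt
  have hagree : ∀ j k : ℕ, ∀ t, |t| < j * ε → |t| < k * ε → f j t = f k t := by
    intro j k t hj hk
    set c := min (j * ε) (k * ε)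
    have hsub : ∀ n : ℕ, c ≤ n * ε → ∀ s ∈ Ioo (-c) c, s ∈ Ioo (-(n * ε)) (n * ε) :=
      fun n hn s hs => ⟨by linarith [hs.1], by linarith [hs.2]⟩
    have htc : |t| < c := lt_min hj hk
    refine ODE_solution_unique_of_mem_Ioo (s := fun _ => univ) (fun t _ => (hlip t).lipschitzOnWith)
      (t₀ := 0) ⟨by linarith [abs_nonneg t], by linarith [abs_nonneg t]⟩
      (fun s hs => ⟨hderiv j s (hsub j (min_le_left _ _) s hs), trivial⟩)
      (fun s hs => ⟨hderiv k s (hsub k (min_le_right _ _) s hs), trivial⟩)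
      (by rw [hf0, hf0]) (abs_lt.mp htc)
  set N : ℝ → ℕ := fun t => ⌈|t| / ε⌉₊ + 1
  have hN : ∀ t, |t| < N t * ε := fun t => by
    have := Nat.le_ceil (|t| / ε)
    rw [div_le_iff₀ hε] at this
    push_cast [N]
    linarith
  refine ⟨fun t => f (N t) t, hf0 _, fun t => ?_⟩
  have hU : Ioo (-(N t * ε)) (N t * ε) ∈ 𝓝 t :=
    Ioo_mem_nhds (abs_lt.mp (hN t)).1 (abs_lt.mp (hN t)).2
  have heq : (fun s => f (N s) s) =ᶠ[𝓝 t] f (N t) :=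
    eventually_of_mem hU fun s hs => hagree _ _ s (hN s) (abs_lt.mpr hs)
  exact (hderiv _ t (mem_of_mem_nhds hU)).congr_of_eventuallyEq heq

variable [CompleteSpace E]

theorem exists_isIntegralCurveOn_Icc_of_lipschitzWith {K : ℝ≥0} (hK : 0 < K)
    (hlip : ∀ t, LipschitzWith K (v t)) (hv0 : ∀ t, v t 0 = 0)
    (hcont : ∀ x, Continuous fun t => v t x) (t₀ : ℝ) (x₀ : E) :
    ∃ f : ℝ → E, f t₀ = x₀ ∧
      IsIntegralCurveOn f v (Icc (t₀ - (2 * K : ℝ)⁻¹) (t₀ + (2 * K : ℝ)⁻¹)) := by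
  have hε : 0 < (2 * K : ℝ)⁻¹ := by positivity
  have hpl : IsPicardLindelof v (tmin := t₀ - (2 * K : ℝ)⁻¹) (tmax := t₀ + (2 * K : ℝ)⁻¹)
      ⟨t₀, by constructor <;> linarith⟩ x₀ ‖x₀‖₊ 0 (2 * K * ‖x₀‖₊) K := by
    refine ⟨fun t _ => (hlip t).lipschitzOnWith, fun x _ => (hcont x).continuousOn,
      fun t _ x hx => ?_, ?_⟩
    · have hx' : ‖x‖ ≤ 2 * ‖x₀‖ := by
        have := norm_le_norm_add_norm_sub' x x₀
        rw [Metric.mem_closedBall, dist_eq_norm] at hx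
        push_cast at hx
        linarith
      calc ‖v t x‖ ≤ K * ‖x‖ := (hlip t).norm_le_mul (hv0 t) x
        _ ≤ K * (2 * ‖x₀‖) := by gcongr
        _ = _ := by push_cast; ring
    · simp only [add_sub_cancel_left, sub_sub_cancel, max_self, NNReal.coe_zero, sub_zero]
      push_cast
      field_simp
      rfl
  exact hpl.exists_eq_forall_mem_Icc_hasDerivWithinAt₀

theorem exists_isIntegralCurve_of_lipschitzWith {K : ℝ≥0} (hlip : ∀ t, LipschitzWith K (v t))
    (hv0 : ∀ t, v t 0 = 0) (hcont : ∀ x, Continuous fun t => v t x) (x₀ : E) :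
    ∃ f : ℝ → E, f 0 = x₀ ∧ IsIntegralCurve f v := by
  have hlip' : ∀ t, LipschitzWith (K + 1) (v t) := fun t => (hlip t).weaken (by simp)
  exact exists_isIntegralCurve_of_uniform_step hlip' (by positivity)
    (exists_isIntegralCurveOn_Icc_of_lipschitzWith (by positivity) hlip' hv0 hcont) x₀

end GlobalExistence

theorem exists_hasDerivAt_of_linear_second_order {q : ℝ → ℝ} {K : ℝ} (hq : Continuous q)
    (hqK : ∀ t, |q t| ≤ K) (y₀ y₀' : ℝ) :
    ∃ y y' : ℝ → ℝ, y 0 = y₀ ∧ y' 0 = y₀' ∧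
      (∀ t, HasDerivAt y (y' t) t) ∧ ∀ t, HasDerivAt y' (q t * y t) t := by
  set v : ℝ → ℝ × ℝ → ℝ × ℝ := fun t x => (x.2, q t * x.1)
  have hlip : ∀ t, LipschitzWith (max 1 K.toNNReal) (v t) := fun t => by
    refine (LipschitzWith.prod_snd.prodMk
      ((lipschitzWith_smul (q t)).comp LipschitzWith.prod_fst)).weaken ?_
    gcongr
    rw [mul_one, ← NNReal.coe_le_coe, coe_nnnorm, Real.norm_eq_abs, Real.coe_toNNReal']
    exact (hqK t).trans (le_max_left _ _)
  obtain ⟨f, hf0, hf⟩ := exists_isIntegralCurve_of_lipschitzWith hlip (fun t => by simp [v])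
    (fun x => continuous_const.prodMk (hq.mul continuous_const)) (y₀, y₀')
  refine ⟨fun t => (f t).1, fun t => (f t).2, by simp [hf0], by simp [hf0],
    fun t => ?_, fun t => ?_⟩
  · exact hasFDerivAt_fst.comp_hasDerivAt t (hf t)
  · exact hasFDerivAt_snd.comp_hasDerivAt t (hf t)

theorem wronskian_eq_of_hasDerivAt {q y₁ y₁' y₂ y₂' : ℝ → ℝ}
    (h₁ : ∀ t, HasDerivAt y₁ (y₁' t) t) (h₁' : ∀ t, HasDerivAt y₁' (q t * y₁ t) t)
    (h₂ : ∀ t, HasDerivAt y₂ (y₂' t) t) (h₂' : ∀ t, HasDerivAt y₂' (q t * y₂ t) t) (s t : ℝ) :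
    y₁ t * y₂' t - y₂ t * y₁' t = y₁ s * y₂' s - y₂ s * y₁' s := by
  have hW : ∀ t, HasDerivAt (fun t => y₁ t * y₂' t - y₂ t * y₁' t) 0 t := fun t =>
    (((h₁ t).mul (h₂' t)).sub ((h₂ t).mul (h₁' t))).congr_deriv (by ring)
  exact is_const_of_deriv_eq_zero (fun t => (hW t).differentiableAt) (fun t => (hW t).deriv) t s

theorem le_mul_exp_sub_of_hasDerivAt_le {u u' H h : ℝ → ℝ}
    (hu : ∀ t, HasDerivAt u (u' t) t) (hH : ∀ t, HasDerivAt H (h t) t)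
    (hle : ∀ t, 0 ≤ t → u' t ≤ h t * u t) {t : ℝ} (ht : 0 ≤ t) :
    u t ≤ u 0 * exp (H t - H 0) := by
  have hΦ : ∀ s, HasDerivAt (fun s => u s * exp (-H s)) ((u' s - h s * u s) * exp (-H s)) s :=
    fun s => ((hu s).mul (hH s).neg.exp).congr_deriv (by simp only [Pi.neg_apply]; ring)
  have hanti : AntitoneOn (fun s => u s * exp (-H s)) (Ici 0) := by
    refine antitoneOn_of_hasDerivWithinAt_nonpos (convex_Ici 0)
      (fun s _ => (hΦ s).continuousAt.continuousWithinAt) (fun s _ => (hΦ s).hasDerivWithinAt)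
      fun s hs => ?_
    rw [interior_Ici] at hs
    exact mul_nonpos_of_nonpos_of_nonneg (sub_nonpos.mpr (hle s (le_of_lt hs))) (exp_pos _).le
  calc u t = u t * exp (-H t) * exp (H t) := by
        rw [mul_assoc, ← exp_add, neg_add_cancel, exp_zero, mul_one]
    _ ≤ u 0 * exp (-H 0) * exp (H t) :=
        mul_le_mul_of_nonneg_right (hanti self_mem_Ici ht ht) (exp_pos _).le
    _ = u 0 * exp (H t - H 0) := by rw [mul_assoc, ← exp_add, neg_add_eq_sub]

theorem energy_deriv_le {m V a b : ℝ} (hm : 0 < m) (hV : 0 ≤ V) :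
    2 * b * (m ^ 2 * a - V * a) + m ^ 2 * (2 * a * b) ≤
      (2 * m + V / m) * (b ^ 2 + m ^ 2 * a ^ 2) := by
  have h : (2 * m + V / m) * (b ^ 2 + m ^ 2 * a ^ 2) -
      (2 * b * (m ^ 2 * a - V * a) + m ^ 2 * (2 * a * b)) =
        (2 * m ^ 2 * (b - m * a) ^ 2 + V * (b + m * a) ^ 2) / m := by
    field_simp
    ring
  rw [← sub_nonneg, h]
  positivity

theorem exists_abs_le_exp_of_hasDerivAt {m c : ℝ} (hm : 0 < m) {y y' V G : ℝ → ℝ}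
    (hy : ∀ t, HasDerivAt y (y' t) t) (hy' : ∀ t, HasDerivAt y' (m ^ 2 * y t - V t * y t) t)
    (hV : ∀ t, 0 ≤ V t) (hG : ∀ t, HasDerivAt G (V t) t) (hGc : ∀ t, G t ≤ c) :
    ∃ C > 0, ∀ t, 0 ≤ t → |y t| ≤ C * exp (m * t) ∧ |y' t| ≤ C * exp (m * t) := by
  set u : ℝ → ℝ := fun t => y' t ^ 2 + m ^ 2 * y t ^ 2
  have hu : ∀ t, HasDerivAt u (2 * y' t * (m ^ 2 * y t - V t * y t) + m ^ 2 * (2 * y t * y' t)) t :=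
    fun t => (((hy' t).pow 2).add (((hy t).pow 2).const_mul _)).congr_deriv (by ring)
  have hH : ∀ t, HasDerivAt (fun t => 2 * m * t + G t / m) (2 * m + V t / m) t := fun t =>
    (((hasDerivAt_id t).const_mul (2 * m)).add ((hG t).div_const m)).congr_deriv (by ring)
  set B := u 0 * exp ((c - G 0) / m)
  have hB : 0 ≤ B := by positivity
  have hu_le : ∀ t, 0 ≤ t → u t ≤ (√B * exp (m * t)) ^ 2 := fun t ht => by
    have hGt : G t / m ≤ c / m := div_le_div_of_nonneg_right (hGc t) hm.le
    calc u t ≤ u 0 * exp (2 * m * t + G t / m - (2 * m * 0 + G 0 / m)) :=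
          le_mul_exp_sub_of_hasDerivAt_le hu hH (fun t _ => energy_deriv_le hm (hV t)) ht
      _ ≤ u 0 * exp ((c - G 0) / m + (m * t + m * t)) := by
          gcongr
          rw [sub_div]
          linarith
      _ = (√B * exp (m * t)) ^ 2 := by
          rw [mul_pow, sq_sqrt hB, exp_add, exp_add]
          ring
  refine ⟨√B / m + √B + 1, by positivity, fun t ht => ?_⟩
  have hu_t : y' t ^ 2 + m ^ 2 * y t ^ 2 ≤ (√B * exp (m * t)) ^ 2 := hu_le t ht
  have hbound : 0 ≤ √B * exp (m * t) := by positivity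
  have hy'_le : |y' t| ≤ √B * exp (m * t) :=
    abs_le_of_sq_le_sq (by nlinarith [sq_nonneg (m * y t)]) hbound
  have hy_le : |m * y t| ≤ √B * exp (m * t) :=
    abs_le_of_sq_le_sq (by nlinarith [sq_nonneg (y' t)]) hbound
  rw [abs_mul, abs_of_pos hm] at hy_le
  have hq : 0 ≤ √B / m := by positivity
  constructor
  · calc |y t| ≤ √B / m * exp (m * t) := by rw [div_mul_eq_mul_div, le_div_iff₀ hm]; linarith
      _ ≤ _ := by gcongr; linarith [sqrt_nonneg B]
  · calc |y' t| ≤ √B * exp (m * t) := hy'_le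
      _ ≤ _ := by gcongr; linarith

theorem Real.hasDerivAt_tanh (x : ℝ) : HasDerivAt tanh (cosh x ^ 2)⁻¹ x := by
  have h := (hasDerivAt_sinh x).div (hasDerivAt_cosh x) (cosh_pos x).ne'
  rw [show sinh / cosh = tanh from funext fun x => (tanh_eq_sinh_div_cosh x).symm] at h
  refine h.congr_deriv ?_
  rw [← one_div, ← cosh_sq_sub_sinh_sq x]
  ring

theorem hasDerivAt_alph (m : ℝ) {p : ℕ} (hp : p ≠ 0) (t : ℝ) :
    HasDerivAt (alph m p) (-m * tanh (p * m * t) * alph m p t) t := by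
  have hch := cosh_pos (p * m * t)
  have hden := (((hasDerivAt_id' t).const_mul (p * m : ℝ)).cosh).rpow_const (p := 1 / p)
    (Or.inl hch.ne')
  have := (hasDerivAt_const t (m ^ ((1 : ℝ) / p) * ((p : ℝ) + 1) ^ ((1 : ℝ) / (2 * p)))).div hden
    (rpow_pos_of_pos hch _).ne'
  refine this.congr_deriv ?_
  rw [rpow_sub_one hch.ne', tanh_eq_sinh_div_cosh]
  simp only [alph]
  field_simp
  ring

theorem deriv_alph (m : ℝ) {p : ℕ} (hp : p ≠ 0) :
    deriv (alph m p) = fun t => -m * tanh (p * m * t) * alph m p t :=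
  funext fun t => (hasDerivAt_alph m hp t).deriv

theorem continuous_alph (m : ℝ) {p : ℕ} (hp : p ≠ 0) : Continuous (alph m p) :=
  continuous_iff_continuousAt.mpr fun t => (hasDerivAt_alph m hp t).continuousAt

section Homoclinic

variable {m : ℝ} {p : ℕ}

theorem alph_pos (hm : 0 < m) (t : ℝ) : 0 < alph m p t := by
  unfold alph
  have := cosh_pos (p * m * t)
  positivity

theorem alph_pow_two_mul (hm : 0 < m) (hp : p ≠ 0) (t : ℝ) :
    alph m p t ^ (2 * p) = m ^ 2 * (p + 1) / cosh (p * m * t) ^ 2 := by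
  have hch := cosh_pos (p * m * t)
  have hpow : ∀ {x : ℝ} (a : ℝ), 0 ≤ x → (x ^ a) ^ (2 * p) = x ^ (a * (2 * p)) := fun a hx => by
    rw [← rpow_natCast, ← rpow_mul hx]
    push_cast
    rfl
  simp only [alph, div_pow, mul_pow]
  rw [hpow _ hm.le, hpow _ (by positivity), hpow _ hch.le]
  rw [show 1 / (p : ℝ) * (2 * p) = (2 : ℕ) by field_simp; norm_num,
    show 1 / (2 * p : ℝ) * (2 * p) = 1 by field_simp, rpow_natCast, rpow_natCast, rpow_one]

theorem hasDerivAt_deriv_alph (hm : 0 < m) (hp : p ≠ 0) (t : ℝ) :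
    HasDerivAt (deriv (alph m p)) (m ^ 2 * alph m p t - alph m p t ^ (2 * p + 1)) t := by
  rw [deriv_alph m hp]
  have htanh := (hasDerivAt_tanh (p * m * t)).comp t ((hasDerivAt_id' t).const_mul (p * m : ℝ))
  refine ((htanh.const_mul (-m)).mul (hasDerivAt_alph m hp t)).congr_deriv ?_
  rw [Function.comp_apply, pow_succ (alph m p t), alph_pow_two_mul hm hp, tanh_eq_sinh_div_cosh]
  set x := (p : ℝ) * m * t
  field_simp
  linear_combination (-alph m p t) * cosh_sq x

theorem hasDerivAt_deriv_deriv_alph (hm : 0 < m) (hp : p ≠ 0) (t : ℝ) :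
    HasDerivAt (deriv (deriv (alph m p)))
      ((m ^ 2 - (2 * p + 1) * alph m p t ^ (2 * p)) * deriv (alph m p) t) t := by
  rw [show deriv (deriv (alph m p)) = fun t => m ^ 2 * alph m p t - alph m p t ^ (2 * p + 1) from
    funext fun t => (hasDerivAt_deriv_alph hm hp t).deriv]
  have hα := (hasDerivAt_alph m hp t).differentiableAt.hasDerivAt
  exact ((hα.const_mul (m ^ 2)).sub (hα.pow (2 * p + 1))).congr_deriv (by push_cast; ring)

theorem hasDerivAt_mul_tanh_alph_pow (hm : 0 < m) (hp : p ≠ 0) (t : ℝ) :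
    HasDerivAt (fun t => (2 * p + 1) * (p + 1) * m / p * tanh (p * m * t))
      ((2 * p + 1) * alph m p t ^ (2 * p)) t := by
  have htanh := (hasDerivAt_tanh (p * m * t)).comp t ((hasDerivAt_id' t).const_mul (p * m : ℝ))
  refine (htanh.const_mul ((2 * p + 1) * (p + 1) * m / p)).congr_deriv ?_
  rw [alph_pow_two_mul hm hp]
  field_simp

theorem alph_pow_two_mul_le (hm : 0 < m) (hp : p ≠ 0) (t : ℝ) :
    alph m p t ^ (2 * p) ≤ m ^ 2 * (p + 1) := by
  rw [alph_pow_two_mul hm hp]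
  exact div_le_self (by positivity) (one_le_pow₀ (one_le_cosh _))

end Homoclinic

theorem stmt_13 (m : ℝ) (hm : 0 < m) (p : ℕ) (hp : 1 ≤ p) :
    ∃ γ : ℝ → ℝ, ∃ C > 0,
      (∀ t : ℝ, HasDerivAt γ (deriv γ t) t) ∧
      (∀ t : ℝ, HasDerivAt (deriv γ)
          (m ^ 2 * γ t - (2 * p + 1) * (alph m p t) ^ (2 * p) * γ t) t) ∧
      (∀ t : ℝ, 0 ≤ t → |γ t| ≤ C * Real.exp (m * t) ∧ |deriv γ t| ≤ C * Real.exp (m * t)) ∧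
      ∃ W : ℝ, W ≠ 0 ∧
        ∀ t : ℝ, deriv (alph m p) t * deriv γ t - γ t * deriv (deriv (alph m p)) t = W := by
  have hp0 : p ≠ 0 := Nat.one_le_iff_ne_zero.mp hp
  set V : ℝ → ℝ := fun t => (2 * p + 1) * alph m p t ^ (2 * p)
  have hV_nonneg : ∀ t, 0 ≤ V t := fun t => by have := alph_pos (p := p) hm t; positivity
  have hV_le : ∀ t, V t ≤ (2 * p + 1) * (m ^ 2 * (p + 1)) := fun t =>
    mul_le_mul_of_nonneg_left (alph_pow_two_mul_le hm hp0 t) (by positivity)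
  obtain ⟨γ, δ, hγ0, hδ0, hγ, hδ⟩ :=
    exists_hasDerivAt_of_linear_second_order (q := fun t => m ^ 2 - V t)
    (K := m ^ 2 + (2 * p + 1) * (m ^ 2 * (p + 1)))
    (continuous_const.sub (continuous_const.mul ((continuous_alph m hp0).pow _)))
    (fun t => abs_le.mpr ⟨by linarith [hV_le t, sq_nonneg m], by linarith [hV_nonneg t, hV_le t]⟩)
    1 0
  have hδ' : ∀ t, HasDerivAt δ (m ^ 2 * γ t - V t * γ t) t :=
    fun t => (hδ t).congr_deriv (sub_mul _ _ _)
  have hderiv : deriv γ = δ := funext fun t => (hγ t).deriv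
  subst hderiv
  obtain ⟨C, hC, hbound⟩ := exists_abs_le_exp_of_hasDerivAt hm hγ hδ' hV_nonneg
    (hasDerivAt_mul_tanh_alph_pow hm hp0)
    fun t => mul_le_of_le_one_right (by positivity) (tanh_lt_one _).le
  refine ⟨γ, C, hC, hγ, hδ', hbound, p * m ^ 2 * alph m p 0, ?_, fun t => ?_⟩
  · have := alph_pos (p := p) hm 0
    positivity
  rw [wronskian_eq_of_hasDerivAt
    (fun t => (hasDerivAt_deriv_alph hm hp0 t).differentiableAt.hasDerivAt)
    (hasDerivAt_deriv_deriv_alph hm hp0) hγ hδ 0 t, hγ0, hδ0,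
    (hasDerivAt_deriv_alph hm hp0 0).deriv, pow_succ (alph m p 0), alph_pow_two_mul hm hp0]
  simp only [mul_zero, cosh_zero, one_pow, div_one]
  ring
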